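/- (Quadratic-form representations of the Hausman statistics.) Under the rank condition: (i) if σ̃² ≠ 0 then H₂ := T·(β̃−β̂)ᵀ(σ̃²Δ̂)⁻¹(β̃−β̂) = T·(yᵀΨ₀y)/(yᵀΛ₃y); (ii) if σ̂² ≠ 0 then H₃ := T·(β̃−β̂)ᵀ(σ̂²Δ̂)⁻¹(β̃−β̂) = T·(yᵀΨ₀y)/(yᵀΛ₄y); (iii) if Σ̂₁ := σ̃²Ω̂_IV⁻¹ − σ̂²Ω̂_LS⁻¹ is invertible then H₁ := T·(β̃−β̂)ᵀΣ̂₁⁻¹(β̃−β̂) = T·(C₁y)ᵀ[(yᵀΛ₃y)·Ω̂_IV⁻¹ − (yᵀΛ₄y)·Ω̂_LS⁻¹]⁻¹(C₁y). -/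

import Mathlib

open Matrix

variable {T G k₁ k₂ : ℕ}

/-- Orthogonal projection `P̄[A] = A(AᵀA)⁻¹Aᵀ` onto the column space of `A`. -/
noncomputable def projM {n : Type*} [Fintype n] [DecidableEq n]
    (A : Matrix (Fin T) n ℝ) : Matrix (Fin T) (Fin T) ℝ :=
  A * (Aᵀ * A)⁻¹ * Aᵀ

/-- The annihilator `M̄[A] = I - P̄[A]`. -/
noncomputable def annM {n : Type*} [Fintype n] [DecidableEq n]
    (A : Matrix (Fin T) n ℝ) : Matrix (Fin T) (Fin T) ℝ :=
  1 - projM A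

noncomputable def M1 (X₁ : Matrix (Fin T) (Fin k₁) ℝ) : Matrix (Fin T) (Fin T) ℝ :=
  annM X₁

noncomputable def Pm (X₁ : Matrix (Fin T) (Fin k₁) ℝ) (X₂ : Matrix (Fin T) (Fin k₂) ℝ) :
    Matrix (Fin T) (Fin T) ℝ :=
  projM (fromCols X₁ X₂)

noncomputable def Mm (X₁ : Matrix (Fin T) (Fin k₁) ℝ) (X₂ : Matrix (Fin T) (Fin k₂) ℝ) :
    Matrix (Fin T) (Fin T) ℝ :=
  annM (fromCols X₁ X₂)

noncomputable def N1 (X₁ : Matrix (Fin T) (Fin k₁) ℝ) (X₂ : Matrix (Fin T) (Fin k₂) ℝ) :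
    Matrix (Fin T) (Fin T) ℝ :=
  M1 X₁ * Pm X₁ X₂

noncomputable def B1 (Y : Matrix (Fin T) (Fin G) ℝ) (X₁ : Matrix (Fin T) (Fin k₁) ℝ) :
    Matrix (Fin G) (Fin T) ℝ :=
  (Yᵀ * M1 X₁ * Y)⁻¹ * (Yᵀ * M1 X₁)

noncomputable def B2 (Y : Matrix (Fin T) (Fin G) ℝ) (X₁ : Matrix (Fin T) (Fin k₁) ℝ)
    (X₂ : Matrix (Fin T) (Fin k₂) ℝ) : Matrix (Fin G) (Fin T) ℝ :=
  (Yᵀ * N1 X₁ X₂ * Y)⁻¹ * (Yᵀ * N1 X₁ X₂)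

noncomputable def C1 (Y : Matrix (Fin T) (Fin G) ℝ) (X₁ : Matrix (Fin T) (Fin k₁) ℝ)
    (X₂ : Matrix (Fin T) (Fin k₂) ℝ) : Matrix (Fin G) (Fin T) ℝ :=
  B2 Y X₁ X₂ - B1 Y X₁

/-- OLS estimator `β̂`. -/
noncomputable def betaOLS (y : Fin T → ℝ) (Y : Matrix (Fin T) (Fin G) ℝ)
    (X₁ : Matrix (Fin T) (Fin k₁) ℝ) : Fin G → ℝ :=
  B1 Y X₁ *ᵥ y

/-- 2SLS estimator `β̃`. -/
noncomputable def beta2S (y : Fin T → ℝ) (Y : Matrix (Fin T) (Fin G) ℝ)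
    (X₁ : Matrix (Fin T) (Fin k₁) ℝ) (X₂ : Matrix (Fin T) (Fin k₂) ℝ) : Fin G → ℝ :=
  B2 Y X₁ X₂ *ᵥ y

noncomputable def OmIV (Y : Matrix (Fin T) (Fin G) ℝ) (X₁ : Matrix (Fin T) (Fin k₁) ℝ)
    (X₂ : Matrix (Fin T) (Fin k₂) ℝ) : Matrix (Fin G) (Fin G) ℝ :=
  (T : ℝ)⁻¹ • (Yᵀ * N1 X₁ X₂ * Y)

noncomputable def OmLS (Y : Matrix (Fin T) (Fin G) ℝ) (X₁ : Matrix (Fin T) (Fin k₁) ℝ) :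
    Matrix (Fin G) (Fin G) ℝ :=
  (T : ℝ)⁻¹ • (Yᵀ * M1 X₁ * Y)

noncomputable def SigV (Y : Matrix (Fin T) (Fin G) ℝ) (X₁ : Matrix (Fin T) (Fin k₁) ℝ)
    (X₂ : Matrix (Fin T) (Fin k₂) ℝ) : Matrix (Fin G) (Fin G) ℝ :=
  (T : ℝ)⁻¹ • (Yᵀ * Mm X₁ X₂ * Y)

noncomputable def Dhat (Y : Matrix (Fin T) (Fin G) ℝ) (X₁ : Matrix (Fin T) (Fin k₁) ℝ)
    (X₂ : Matrix (Fin T) (Fin k₂) ℝ) : Matrix (Fin G) (Fin G) ℝ :=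
  (OmIV Y X₁ X₂)⁻¹ - (OmLS Y X₁)⁻¹

noncomputable def Psi0 (Y : Matrix (Fin T) (Fin G) ℝ) (X₁ : Matrix (Fin T) (Fin k₁) ℝ)
    (X₂ : Matrix (Fin T) (Fin k₂) ℝ) : Matrix (Fin T) (Fin T) ℝ :=
  (C1 Y X₁ X₂)ᵀ * (Dhat Y X₁ X₂)⁻¹ * C1 Y X₁ X₂

noncomputable def N2 (Y : Matrix (Fin T) (Fin G) ℝ) (X₁ : Matrix (Fin T) (Fin k₁) ℝ)
    (X₂ : Matrix (Fin T) (Fin k₂) ℝ) : Matrix (Fin T) (Fin T) ℝ :=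
  1 - M1 X₁ * Y * B2 Y X₁ X₂

noncomputable def Lam1 (Y : Matrix (Fin T) (Fin G) ℝ) (X₁ : Matrix (Fin T) (Fin k₁) ℝ)
    (X₂ : Matrix (Fin T) (Fin k₂) ℝ) : Matrix (Fin T) (Fin T) ℝ :=
  (T : ℝ)⁻¹ • (N1 X₁ X₂ * annM (N1 X₁ X₂ * Y) * N1 X₁ X₂)

noncomputable def Lam2 (Y : Matrix (Fin T) (Fin G) ℝ) (X₁ : Matrix (Fin T) (Fin k₁) ℝ)
    (X₂ : Matrix (Fin T) (Fin k₂) ℝ) : Matrix (Fin T) (Fin T) ℝ :=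
  M1 X₁ * ((T : ℝ)⁻¹ • annM (M1 X₁ * Y) - Psi0 Y X₁ X₂) * M1 X₁

noncomputable def Lam3 (Y : Matrix (Fin T) (Fin G) ℝ) (X₁ : Matrix (Fin T) (Fin k₁) ℝ)
    (X₂ : Matrix (Fin T) (Fin k₂) ℝ) : Matrix (Fin T) (Fin T) ℝ :=
  (T : ℝ)⁻¹ • (M1 X₁ * (N2 Y X₁ X₂)ᵀ * N2 Y X₁ X₂ * M1 X₁)

noncomputable def Lam4 (Y : Matrix (Fin T) (Fin G) ℝ) (X₁ : Matrix (Fin T) (Fin k₁) ℝ) :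
    Matrix (Fin T) (Fin T) ℝ :=
  (T : ℝ)⁻¹ • (M1 X₁ * annM (M1 X₁ * Y) * M1 X₁)

def Ybar (Y : Matrix (Fin T) (Fin G) ℝ) (X₁ : Matrix (Fin T) (Fin k₁) ℝ) :
    Matrix (Fin T) (Fin G ⊕ Fin k₁) ℝ :=
  fromCols Y X₁

def Zfull (Y : Matrix (Fin T) (Fin G) ℝ) (X₁ : Matrix (Fin T) (Fin k₁) ℝ)
    (X₂ : Matrix (Fin T) (Fin k₂) ℝ) : Matrix (Fin T) (Fin G ⊕ (Fin k₁ ⊕ Fin k₂)) ℝ :=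
  fromCols Y (fromCols X₁ X₂)

noncomputable def PsiR (Y : Matrix (Fin T) (Fin G) ℝ) (X₁ : Matrix (Fin T) (Fin k₁) ℝ)
    (X₂ : Matrix (Fin T) (Fin k₂) ℝ) : Matrix (Fin T) (Fin T) ℝ :=
  (T : ℝ)⁻¹ • (annM (Ybar Y X₁) - annM (Zfull Y X₁ X₂))

noncomputable def LamR (Y : Matrix (Fin T) (Fin G) ℝ) (X₁ : Matrix (Fin T) (Fin k₁) ℝ)
    (X₂ : Matrix (Fin T) (Fin k₂) ℝ) : Matrix (Fin T) (Fin T) ℝ :=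
  (T : ℝ)⁻¹ • annM (Zfull Y X₁ X₂)

/-- `σ̂² = (1/T)(y−Yβ̂)ᵀM₁(y−Yβ̂)`. -/
noncomputable def sigHat2 (y : Fin T → ℝ) (Y : Matrix (Fin T) (Fin G) ℝ)
    (X₁ : Matrix (Fin T) (Fin k₁) ℝ) : ℝ :=
  (T : ℝ)⁻¹ * ((y - Y *ᵥ betaOLS y Y X₁) ⬝ᵥ (M1 X₁ *ᵥ (y - Y *ᵥ betaOLS y Y X₁)))

/-- `σ̃² = (1/T)(y−Yβ̃)ᵀM₁(y−Yβ̃)`. -/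
noncomputable def sigTil2 (y : Fin T → ℝ) (Y : Matrix (Fin T) (Fin G) ℝ)
    (X₁ : Matrix (Fin T) (Fin k₁) ℝ) (X₂ : Matrix (Fin T) (Fin k₂) ℝ) : ℝ :=
  (T : ℝ)⁻¹ * ((y - Y *ᵥ beta2S y Y X₁ X₂) ⬝ᵥ (M1 X₁ *ᵥ (y - Y *ᵥ beta2S y Y X₁ X₂)))

/-- `σ̃₁² = (1/T)(y−Yβ̃)ᵀN₁(y−Yβ̃)`. -/
noncomputable def sigTil1sq (y : Fin T → ℝ) (Y : Matrix (Fin T) (Fin G) ℝ)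
    (X₁ : Matrix (Fin T) (Fin k₁) ℝ) (X₂ : Matrix (Fin T) (Fin k₂) ℝ) : ℝ :=
  (T : ℝ)⁻¹ * ((y - Y *ᵥ beta2S y Y X₁ X₂) ⬝ᵥ (N1 X₁ X₂ *ᵥ (y - Y *ᵥ beta2S y Y X₁ X₂)))

/-- `σ̃₂² = σ̂² − (β̃−β̂)ᵀΔ̂⁻¹(β̃−β̂)`. -/
noncomputable def sigTil2sq (y : Fin T → ℝ) (Y : Matrix (Fin T) (Fin G) ℝ)
    (X₁ : Matrix (Fin T) (Fin k₁) ℝ) (X₂ : Matrix (Fin T) (Fin k₂) ℝ) : ℝ :=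
  sigHat2 y Y X₁ -
    (beta2S y Y X₁ X₂ - betaOLS y Y X₁) ⬝ᵥ
      ((Dhat Y X₁ X₂)⁻¹ *ᵥ (beta2S y Y X₁ X₂ - betaOLS y Y X₁))

/-- The rank condition: `X₁`, `X = [X₁, X₂]`, `[Y, X]` and `[P̄[X]Y, X₁]` all have
full column rank. -/
def RankCond (Y : Matrix (Fin T) (Fin G) ℝ) (X₁ : Matrix (Fin T) (Fin k₁) ℝ)
    (X₂ : Matrix (Fin T) (Fin k₂) ℝ) : Prop :=
  X₁.rank = k₁ ∧ (fromCols X₁ X₂).rank = k₁ + k₂ ∧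
    (fromCols Y (fromCols X₁ X₂)).rank = G + (k₁ + k₂) ∧
    (fromCols (Pm X₁ X₂ * Y) X₁).rank = G + k₁

/-!
Since `β̃ − β̂ = C₁y`, we have `yᵀΨ₀y = (β̃ − β̂)ᵀΔ̂⁻¹(β̃ − β̂)`, and as `(c • A)⁻¹ = c⁻¹ • A⁻¹`
the three statistics reduce to identifying the variance estimates as quadratic forms in `y`.
Both residual vectors are linear in `y`: `M₁(y − Yβ̃) = N₂M₁y` and
`M₁(y − Yβ̂) = M̄[M₁Y]M₁y`, and since `M₁` is a symmetric idempotent,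
`(y − Yβ)ᵀM₁(y − Yβ) = |M₁(y − Yβ)|²`. The first identity rests on `B₂M₁ = B₂`, i.e.
`N₁M₁ = N₁`, which holds because the column space of `X₁` lies in that of `X`, so that
`P̄[X]P̄[X₁] = P̄[X₁]`.
-/

lemma Matrix.isUnit_of_rank_eq_card {n K : Type*} [Fintype n] [DecidableEq n] [Field K]
    {A : Matrix n n K} (h : A.rank = Fintype.card n) : IsUnit A := by
  rw [← mulVec_injective_iff_isUnit]
  have hsurj : Function.Surjective A.mulVecLin := by
    rw [← LinearMap.range_eq_top]
    apply Submodule.eq_top_of_finrank_eq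
    rw [Module.finrank_fintype_fun_eq_card]
    exact h
  exact LinearMap.injective_iff_surjective.mpr hsurj

lemma Matrix.isUnit_transpose_mul_self_of_rank_eq_card {m n K : Type*} [Fintype m] [Fintype n]
    [DecidableEq n] [Field K] [LinearOrder K] [IsStrictOrderedRing K] {A : Matrix m n K}
    (h : A.rank = Fintype.card n) : IsUnit (Aᵀ * A) :=
  isUnit_of_rank_eq_card (by rw [rank_transpose_mul_self, h])

lemma Matrix.dotProduct_transpose_mul_self_mulVec {m n R : Type*} [Fintype m] [Fintype n]
    [CommSemiring R] (K : Matrix m n R) (x : n → R) :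
    x ⬝ᵥ ((Kᵀ * K) *ᵥ x) = (K *ᵥ x) ⬝ᵥ (K *ᵥ x) := by
  rw [← mulVec_mulVec, dotProduct_transpose_mulVec, dotProduct_comm]

lemma Matrix.IsSymm.dotProduct_mulVec_of_isIdempotentElem {n R : Type*} [Fintype n]
    [CommSemiring R] {M : Matrix n n R} (hT : M.IsSymm) (hM : IsIdempotentElem M) (x : n → R) :
    x ⬝ᵥ (M *ᵥ x) = (M *ᵥ x) ⬝ᵥ (M *ᵥ x) := by
  conv_lhs => rw [← hM.eq, ← congrArg (· * M) hT.eq]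
  exact dotProduct_transpose_mul_self_mulVec M x

lemma Matrix.inv_smul₀ {n K : Type*} [Fintype n] [DecidableEq n] [Field K] (c : K)
    (A : Matrix n n K) : (c • A)⁻¹ = c⁻¹ • A⁻¹ := by
  rcases eq_or_ne c 0 with rfl | hc
  · simp
  by_cases hA : IsUnit A.det
  · have := invertibleOfNonzero hc
    rw [inv_smul A c hA, invOf_eq_inv]
  · have hcA : ¬IsUnit (c • A).det := by
      rwa [det_smul, IsUnit.mul_iff, not_and_or, or_iff_right (by simp [hc])]
    rw [nonsing_inv_apply_not_isUnit _ hA, nonsing_inv_apply_not_isUnit _ hcA, smul_zero]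

section Projection

variable {n : Type*} [Fintype n] [DecidableEq n]

lemma projM_transpose (A : Matrix (Fin T) n ℝ) : (projM A)ᵀ = projM A := by
  rw [projM, transpose_mul, transpose_mul, transpose_transpose, transpose_nonsing_inv,
    transpose_mul, transpose_transpose, Matrix.mul_assoc]

lemma projM_mul_self {A : Matrix (Fin T) n ℝ} (h : IsUnit (Aᵀ * A)) : projM A * A = A := by
  rw [projM, Matrix.mul_assoc, Matrix.mul_assoc,
    nonsing_inv_mul _ ((isUnit_iff_isUnit_det _).mp h), Matrix.mul_one]

-- For singular `AᵀA` the junk inverse `0` makes `projM A = 0`.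
lemma projM_mul_projM (A : Matrix (Fin T) n ℝ) : projM A * projM A = projM A := by
  by_cases h : IsUnit (Aᵀ * A)
  · nth_rw 2 [projM]
    rw [← Matrix.mul_assoc, ← Matrix.mul_assoc, projM_mul_self h, projM]
  · rw [projM, nonsing_inv_apply_not_isUnit _ ((isUnit_iff_isUnit_det _).not.mp h)]
    simp

lemma annM_transpose (A : Matrix (Fin T) n ℝ) : (annM A)ᵀ = annM A := by
  rw [annM, transpose_sub, transpose_one, projM_transpose]

lemma annM_mul_annM (A : Matrix (Fin T) n ℝ) : annM A * annM A = annM A := by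
  rw [annM, mul_sub, sub_mul, sub_mul, projM_mul_projM]; simp

end Projection

section Estimators

variable (y : Fin T → ℝ) (Y : Matrix (Fin T) (Fin G) ℝ) (X₁ : Matrix (Fin T) (Fin k₁) ℝ)
  (X₂ : Matrix (Fin T) (Fin k₂) ℝ)

lemma M1_transpose : (M1 X₁)ᵀ = M1 X₁ := annM_transpose X₁

lemma M1_mul_M1 : M1 X₁ * M1 X₁ = M1 X₁ := annM_mul_annM X₁

variable {X₁ X₂} in
lemma Pm_mul_projM (hX : IsUnit ((fromCols X₁ X₂)ᵀ * fromCols X₁ X₂)) :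
    Pm X₁ X₂ * projM X₁ = projM X₁ := by
  have hPX₁ : Pm X₁ X₂ * X₁ = X₁ := by
    have h := projM_mul_self hX
    rw [mul_fromCols] at h
    exact (fromCols_inj h).1
  rw [projM, ← Matrix.mul_assoc, ← Matrix.mul_assoc, hPX₁]

variable {X₁ X₂} in
lemma N1_mul_M1 (hX : IsUnit ((fromCols X₁ X₂)ᵀ * fromCols X₁ X₂)) :
    N1 X₁ X₂ * M1 X₁ = N1 X₁ X₂ := by
  simp only [N1, M1, annM, mul_sub, sub_mul, mul_one, one_mul, Matrix.mul_assoc,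
    Pm_mul_projM hX, projM_mul_projM]
  abel

variable {X₁ X₂} in
lemma B2_mul_M1 (hX : IsUnit ((fromCols X₁ X₂)ᵀ * fromCols X₁ X₂)) :
    B2 Y X₁ X₂ * M1 X₁ = B2 Y X₁ X₂ := by
  simp only [B2, Matrix.mul_assoc, N1_mul_M1 hX]

lemma projM_M1_mul_mul_M1 : projM (M1 X₁ * Y) * M1 X₁ = M1 X₁ * Y * B1 Y X₁ := by
  have hA : (M1 X₁ * Y)ᵀ * M1 X₁ = Yᵀ * M1 X₁ := by
    rw [transpose_mul, M1_transpose, Matrix.mul_assoc, M1_mul_M1]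
  have hAA : (M1 X₁ * Y)ᵀ * (M1 X₁ * Y) = Yᵀ * M1 X₁ * Y := by
    rw [← Matrix.mul_assoc, hA]
  rw [projM, hAA, Matrix.mul_assoc, hA, B1, Matrix.mul_assoc]

lemma beta2S_sub_betaOLS : beta2S y Y X₁ X₂ - betaOLS y Y X₁ = C1 Y X₁ X₂ *ᵥ y := by
  rw [C1, sub_mulVec]
  rfl

lemma dotProduct_Psi0_mulVec :
    y ⬝ᵥ (Psi0 Y X₁ X₂ *ᵥ y) =
      (C1 Y X₁ X₂ *ᵥ y) ⬝ᵥ ((Dhat Y X₁ X₂)⁻¹ *ᵥ (C1 Y X₁ X₂ *ᵥ y)) := by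
  rw [Psi0, ← mulVec_mulVec, ← mulVec_mulVec, dotProduct_transpose_mulVec, dotProduct_comm]

variable {X₂} in
lemma dotProduct_Lam3_mulVec (hX : IsUnit ((fromCols X₁ X₂)ᵀ * fromCols X₁ X₂)) :
    y ⬝ᵥ (Lam3 Y X₁ X₂ *ᵥ y) = sigTil2 y Y X₁ X₂ := by
  have hLam3 : Lam3 Y X₁ X₂ =
      (T : ℝ)⁻¹ • ((N2 Y X₁ X₂ * M1 X₁)ᵀ * (N2 Y X₁ X₂ * M1 X₁)) := by
    rw [Lam3, transpose_mul, M1_transpose]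
    simp only [Matrix.mul_assoc]
  have hres : (N2 Y X₁ X₂ * M1 X₁) *ᵥ y = M1 X₁ *ᵥ (y - Y *ᵥ beta2S y Y X₁ X₂) := by
    rw [N2, sub_mul, one_mul, Matrix.mul_assoc (M1 X₁ * Y), B2_mul_M1 Y hX, sub_mulVec,
      mulVec_sub, beta2S, mulVec_mulVec, mulVec_mulVec]
  rw [hLam3, smul_mulVec, dotProduct_smul, dotProduct_transpose_mul_self_mulVec, hres,
    ← IsSymm.dotProduct_mulVec_of_isIdempotentElem (M1_transpose X₁) (M1_mul_M1 X₁),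
    sigTil2, smul_eq_mul]

lemma dotProduct_Lam4_mulVec : y ⬝ᵥ (Lam4 Y X₁ *ᵥ y) = sigHat2 y Y X₁ := by
  have hLam4 : Lam4 Y X₁ = (T : ℝ)⁻¹ •
      ((annM (M1 X₁ * Y) * M1 X₁)ᵀ * (annM (M1 X₁ * Y) * M1 X₁)) := by
    conv_lhs => rw [Lam4, ← annM_mul_annM]
    rw [transpose_mul, M1_transpose, annM_transpose]
    simp only [Matrix.mul_assoc]
  have hres : (annM (M1 X₁ * Y) * M1 X₁) *ᵥ y = M1 X₁ *ᵥ (y - Y *ᵥ betaOLS y Y X₁) := by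
    rw [annM, sub_mul, one_mul, projM_M1_mul_mul_M1, sub_mulVec, mulVec_sub, betaOLS,
      mulVec_mulVec, mulVec_mulVec]
  rw [hLam4, smul_mulVec, dotProduct_smul, dotProduct_transpose_mul_self_mulVec, hres,
    ← IsSymm.dotProduct_mulVec_of_isIdempotentElem (M1_transpose X₁) (M1_mul_M1 X₁),
    sigHat2, smul_eq_mul]

end Estimators

theorem stmt13_general {T G k₁ k₂ : ℕ}
    (y : Fin T → ℝ) (Y : Matrix (Fin T) (Fin G) ℝ)
    (X₁ : Matrix (Fin T) (Fin k₁) ℝ) (X₂ : Matrix (Fin T) (Fin k₂) ℝ)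
    (hrank : RankCond Y X₁ X₂) :
    (sigTil2 y Y X₁ X₂ ≠ 0 →
      (T : ℝ) *
          ((beta2S y Y X₁ X₂ - betaOLS y Y X₁) ⬝ᵥ
            ((sigTil2 y Y X₁ X₂ • Dhat Y X₁ X₂)⁻¹ *ᵥ
              (beta2S y Y X₁ X₂ - betaOLS y Y X₁)))
        = (T : ℝ) * (y ⬝ᵥ (Psi0 Y X₁ X₂ *ᵥ y) / (y ⬝ᵥ (Lam3 Y X₁ X₂ *ᵥ y)))) ∧
    (sigHat2 y Y X₁ ≠ 0 →
      (T : ℝ) *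
          ((beta2S y Y X₁ X₂ - betaOLS y Y X₁) ⬝ᵥ
            ((sigHat2 y Y X₁ • Dhat Y X₁ X₂)⁻¹ *ᵥ
              (beta2S y Y X₁ X₂ - betaOLS y Y X₁)))
        = (T : ℝ) * (y ⬝ᵥ (Psi0 Y X₁ X₂ *ᵥ y) / (y ⬝ᵥ (Lam4 Y X₁ *ᵥ y)))) ∧
    (IsUnit (sigTil2 y Y X₁ X₂ • (OmIV Y X₁ X₂)⁻¹ - sigHat2 y Y X₁ • (OmLS Y X₁)⁻¹) →
      (T : ℝ) *
          ((beta2S y Y X₁ X₂ - betaOLS y Y X₁) ⬝ᵥ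
            ((sigTil2 y Y X₁ X₂ • (OmIV Y X₁ X₂)⁻¹ -
                sigHat2 y Y X₁ • (OmLS Y X₁)⁻¹)⁻¹ *ᵥ
              (beta2S y Y X₁ X₂ - betaOLS y Y X₁)))
        = (T : ℝ) *
            ((C1 Y X₁ X₂ *ᵥ y) ⬝ᵥ
              (((y ⬝ᵥ (Lam3 Y X₁ X₂ *ᵥ y)) • (OmIV Y X₁ X₂)⁻¹ -
                  (y ⬝ᵥ (Lam4 Y X₁ *ᵥ y)) • (OmLS Y X₁)⁻¹)⁻¹ *ᵥ
                (C1 Y X₁ X₂ *ᵥ y)))) := by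
  have hX : IsUnit ((fromCols X₁ X₂)ᵀ * fromCols X₁ X₂) :=
    isUnit_transpose_mul_self_of_rank_eq_card (by simpa using hrank.2.1)
  rw [beta2S_sub_betaOLS, dotProduct_Psi0_mulVec, dotProduct_Lam3_mulVec y Y X₁ hX,
    dotProduct_Lam4_mulVec]
  refine ⟨fun _ => ?_, fun _ => ?_, fun _ => rfl⟩ <;>
    rw [inv_smul₀, smul_mulVec, dotProduct_smul, smul_eq_mul, div_eq_inv_mul]

/-- **Quadratic-form representations of the Hausman statistics.**  Under the rank
condition: (i) if `σ̃² ≠ 0` then `H₂ = T(β̃−β̂)ᵀ(σ̃²Δ̂)⁻¹(β̃−β̂) = T·(yᵀΨ₀y)/(yᵀΛ₃y)`;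
(ii) if `σ̂² ≠ 0` then `H₃ = T(β̃−β̂)ᵀ(σ̂²Δ̂)⁻¹(β̃−β̂) = T·(yᵀΨ₀y)/(yᵀΛ₄y)`;
(iii) if `Σ̂₁ = σ̃²Ω̂_IV⁻¹ − σ̂²Ω̂_LS⁻¹` is invertible then
`H₁ = T(β̃−β̂)ᵀΣ̂₁⁻¹(β̃−β̂) = T(C₁y)ᵀ[(yᵀΛ₃y)Ω̂_IV⁻¹ − (yᵀΛ₄y)Ω̂_LS⁻¹]⁻¹(C₁y)`. -/
theorem stmt13 {T G k₁ k₂ : ℕ}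
    (hT : 0 < T) (hG : 0 < G) (hk₁ : 0 < k₁) (hk₂ : 0 < k₂)
    (y : Fin T → ℝ) (Y : Matrix (Fin T) (Fin G) ℝ)
    (X₁ : Matrix (Fin T) (Fin k₁) ℝ) (X₂ : Matrix (Fin T) (Fin k₂) ℝ)
    (hrank : RankCond Y X₁ X₂) :
    (sigTil2 y Y X₁ X₂ ≠ 0 →
      (T : ℝ) *
          ((beta2S y Y X₁ X₂ - betaOLS y Y X₁) ⬝ᵥ
            ((sigTil2 y Y X₁ X₂ • Dhat Y X₁ X₂)⁻¹ *ᵥ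
              (beta2S y Y X₁ X₂ - betaOLS y Y X₁)))
        = (T : ℝ) * (y ⬝ᵥ (Psi0 Y X₁ X₂ *ᵥ y) / (y ⬝ᵥ (Lam3 Y X₁ X₂ *ᵥ y)))) ∧
    (sigHat2 y Y X₁ ≠ 0 →
      (T : ℝ) *
          ((beta2S y Y X₁ X₂ - betaOLS y Y X₁) ⬝ᵥ
            ((sigHat2 y Y X₁ • Dhat Y X₁ X₂)⁻¹ *ᵥ
              (beta2S y Y X₁ X₂ - betaOLS y Y X₁)))
        = (T : ℝ) * (y ⬝ᵥ (Psi0 Y X₁ X₂ *ᵥ y) / (y ⬝ᵥ (Lam4 Y X₁ *ᵥ y)))) ∧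
    (IsUnit (sigTil2 y Y X₁ X₂ • (OmIV Y X₁ X₂)⁻¹ - sigHat2 y Y X₁ • (OmLS Y X₁)⁻¹) →
      (T : ℝ) *
          ((beta2S y Y X₁ X₂ - betaOLS y Y X₁) ⬝ᵥ
            ((sigTil2 y Y X₁ X₂ • (OmIV Y X₁ X₂)⁻¹ -
                sigHat2 y Y X₁ • (OmLS Y X₁)⁻¹)⁻¹ *ᵥ
              (beta2S y Y X₁ X₂ - betaOLS y Y X₁)))
        = (T : ℝ) *
            ((C1 Y X₁ X₂ *ᵥ y) ⬝ᵥ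
              (((y ⬝ᵥ (Lam3 Y X₁ X₂ *ᵥ y)) • (OmIV Y X₁ X₂)⁻¹ -
                  (y ⬝ᵥ (Lam4 Y X₁ *ᵥ y)) • (OmLS Y X₁)⁻¹)⁻¹ *ᵥ
                (C1 Y X₁ X₂ *ᵥ y)))) :=
  stmt13_general y Y X₁ X₂ hrank
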